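/- Let P and Q be cancellative commutative monoids, f : P → Q a monoid morphism, and Γ a Q-graph. Define f*Γ = {(λ,n) ∈ Γ × P : d(λ) = f(n)}, with d(λ,n) = n, s(λ,n) = s(λ), r(λ,n) = r(λ), and composition (μ,m)(ν,n) = (μν, m+n). Then f*Γ is a P-graph. -/

import Mathlib

/-- A `P`-graph structure on a set `V` of vertices (objects) and a set `E` of paths
(morphisms): a small category with range `r`, source `s`, identities `vert`,
a (partially meaningful) composition `comp`, together with a degree functor `d : E → P`
satisfying the unique factorisation property. -/
structure PGraphStr (P : Type) [AddCommMonoid P] (V : Type) (E : Type) where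
  r : E → V
  s : E → V
  d : E → P
  vert : V → E
  comp : E → E → E
  r_vert : ∀ v, r (vert v) = v
  s_vert : ∀ v, s (vert v) = v
  d_vert : ∀ v, d (vert v) = 0
  r_comp : ∀ μ ν, s μ = r ν → r (comp μ ν) = r μ
  s_comp : ∀ μ ν, s μ = r ν → s (comp μ ν) = s ν
  d_comp : ∀ μ ν, s μ = r ν → d (comp μ ν) = d μ + d ν
  comp_assoc : ∀ μ ν ξ, s μ = r ν → s ν = r ξ →
    comp (comp μ ν) ξ = comp μ (comp ν ξ)
  vert_comp : ∀ μ, comp (vert (r μ)) μ = μ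
  comp_vert : ∀ μ, comp μ (vert (s μ)) = μ
  factor : ∀ ξ p q, d ξ = p + q →
    ∃! ηζ : E × E, s ηζ.1 = r ηζ.2 ∧ d ηζ.1 = p ∧ d ηζ.2 = q ∧ comp ηζ.1 ηζ.2 = ξ

variable {k : ℕ} {V E : Type}

/-- A `k`-graph (an `ℕ^k`-graph) is row-finite with no sources when
`0 < |vΛ^n| < ∞` for every vertex `v` and degree `n`. -/
def RowFiniteNoSources (Λ : PGraphStr (Fin k → ℕ) V E) : Prop :=
  ∀ (v : V) (n : Fin k → ℕ),
    {e : E | Λ.r e = v ∧ Λ.d e = n}.Finite ∧ {e : E | Λ.r e = v ∧ Λ.d e = n}.Nonempty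

/-- An infinite path in a `k`-graph `Λ`: a degree-preserving functor `Ω_{ℕ^k} → Λ`,
recorded by its segments `x(m,n)` for `m ≤ n`. -/
structure InfPath (Λ : PGraphStr (Fin k → ℕ) V E) where
  seg : ∀ m n : Fin k → ℕ, m ≤ n → E
  d_seg : ∀ m n (h : m ≤ n), Λ.d (seg m n h) = n - m
  src : ∀ m n p (h₁ : m ≤ n) (h₂ : n ≤ p), Λ.s (seg m n h₁) = Λ.r (seg n p h₂)
  seg_self : ∀ m, seg m m le_rfl = Λ.vert (Λ.r (seg m m le_rfl))
  comp_seg : ∀ m n p (h₁ : m ≤ n) (h₂ : n ≤ p),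
    Λ.comp (seg m n h₁) (seg n p h₂) = seg m p (h₁.trans h₂)

/-- The range `x(0)` of an infinite path. -/
def InfPath.range {Λ : PGraphStr (Fin k → ℕ) V E} (x : InfPath Λ) : V :=
  Λ.r (x.seg 0 0 le_rfl)

/-- The shift `σ^p(x)`, with `σ^p(x)(m,n) = x(m+p,n+p)`. -/
def InfPath.shift {Λ : PGraphStr (Fin k → ℕ) V E} (p : Fin k → ℕ) (x : InfPath Λ) :
    InfPath Λ where
  seg m n h := x.seg (m + p) (n + p) (add_le_add h (le_refl p))
  d_seg m n h := by
    rw [x.d_seg]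
    funext i
    simp [Nat.add_sub_add_right]
  src m n q h₁ h₂ := x.src _ _ _ _ _
  seg_self m := x.seg_self (m + p)
  comp_seg m n q h₁ h₂ := x.comp_seg _ _ _ _ _

/-- `Extends Λ y μ x` means `y = μx`: `y(0, d(μ)) = μ` and `σ^{d(μ)}(y) = x`. -/
def Extends (Λ : PGraphStr (Fin k → ℕ) V E) (y : InfPath Λ) (μ : E) (x : InfPath Λ) :
    Prop :=
  y.seg 0 (Λ.d μ) (fun i => Nat.zero_le _) = μ ∧ y.shift (Λ.d μ) = x

/-- The relation `μ ∼ ν`: `s(μ) = s(ν)` and `μx = νx` for every infinite path `x`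
with range `s(μ)`. -/
def CKeq (Λ : PGraphStr (Fin k → ℕ) V E) (μ ν : E) : Prop :=
  Λ.s μ = Λ.s ν ∧ ∀ x y z : InfPath Λ, x.range = Λ.s μ →
    Extends Λ y μ x → Extends Λ z ν x → y = z

/-- The periodicity set `Per(Λ) = {d(μ) - d(ν) : μ ∼ ν} ⊆ ℤ^k`. -/
def PerSet (Λ : PGraphStr (Fin k → ℕ) V E) : Set (Fin k → ℤ) :=
  {g | ∃ μ ν : E, CKeq Λ μ ν ∧ g = fun i => (Λ.d μ i : ℤ) - (Λ.d ν i : ℤ)}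

/-- A maximal tail in a `k`-graph. -/
def IsMaximalTail (Λ : PGraphStr (Fin k → ℕ) V E) (T : Set V) : Prop :=
  T.Nonempty ∧
  (∀ v₁ ∈ T, ∀ v₂ ∈ T, ∃ w ∈ T,
    (∃ e : E, Λ.r e = v₁ ∧ Λ.s e = w) ∧ ∃ e : E, Λ.r e = v₂ ∧ Λ.s e = w) ∧
  (∀ v ∈ T, ∀ i : Fin k,
    ∃ e : E, Λ.r e = v ∧ Λ.d e = Pi.single i 1 ∧ Λ.s e ∈ T) ∧
  (∀ w ∈ T, ∀ (v : V) (e : E), Λ.r e = v → Λ.s e = w → v ∈ T)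

/-- `Σ_v = {(p,q) : σ^p(x) = σ^q(x) for all x ∈ vΛ^∞}`. -/
def SigmaV (Λ : PGraphStr (Fin k → ℕ) V E) (v : V) :
    Set ((Fin k → ℕ) × (Fin k → ℕ)) :=
  {pq | ∀ x : InfPath Λ, x.range = v → x.shift pq.1 = x.shift pq.2}

/-- `Σ_Λ = ⋃_v Σ_v`. -/
def SigmaL (Λ : PGraphStr (Fin k → ℕ) V E) : Set ((Fin k → ℕ) × (Fin k → ℕ)) :=
  ⋃ v : V, SigmaV Λ v

/-- The hereditary set `H_Per`. -/
def HPer (Λ : PGraphStr (Fin k → ℕ) V E) : Set V :=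
  {v | ∀ lam : E, Λ.r lam = v → ∀ m : Fin k → ℕ,
    (fun i => (Λ.d lam i : ℤ) - (m i : ℤ)) ∈ PerSet Λ →
    ∃ μ : E, Λ.r μ = v ∧ Λ.d μ = m ∧ CKeq Λ lam μ}

/-- The coordinatewise inclusion `ℕ^k →+ ℤ^k`. -/
def intCast (k : ℕ) : (Fin k → ℕ) →+ (Fin k → ℤ) where
  toFun n := fun i => (n i : ℤ)
  map_zero' := by funext i; simp
  map_add' a b := by funext i; simp

/-- The composite `ℕ^k → ℤ^k → ℤ^k/H`. -/
def quotHom (k : ℕ) (H : AddSubgroup (Fin k → ℤ)) :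
    (Fin k → ℕ) →+ (Fin k → ℤ) ⧸ H :=
  (QuotientAddGroup.mk' H).comp (intCast k)

/-- The submonoid `P = f(ℕ^k)` of `ℤ^k/H`. -/
def PMon (k : ℕ) (H : AddSubgroup (Fin k → ℤ)) : AddSubmonoid ((Fin k → ℤ) ⧸ H) :=
  AddMonoidHom.mrange (quotHom k H)

theorem mem_PMon (k : ℕ) (H : AddSubgroup (Fin k → ℤ)) (n : Fin k → ℕ) :
    quotHom k H n ∈ PMon k H :=
  ⟨n, rfl⟩

/-- If `f : P → Q` is a morphism of cancellative commutative monoids and `Γ` is a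
`Q`-graph, then the pullback `f*Γ = {(λ,n) : d(λ) = f(n)}`, with degree `(λ,n) ↦ n`,
source `s(λ)`, range `r(λ)` and composition `(μ,m)(ν,n) = (μν, m+n)`, is a `P`-graph. -/
theorem stmt5 (P Q V E : Type) [AddCancelCommMonoid P] [AddCancelCommMonoid Q]
    [Countable E] [Countable P] (f : P →+ Q) (Γ : PGraphStr Q V E) :
    ∃ str : PGraphStr P V {x : E × P // Γ.d x.1 = f x.2},
      (∀ x, str.r x = Γ.r x.1.1) ∧
      (∀ x, str.s x = Γ.s x.1.1) ∧
      (∀ x, str.d x = x.1.2) ∧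
      (∀ v, (str.vert v).1 = (Γ.vert v, 0)) ∧
      (∀ x y : {x : E × P // Γ.d x.1 = f x.2}, Γ.s x.1.1 = Γ.r y.1.1 →
        (str.comp x y).1 = (Γ.comp x.1.1 y.1.1, x.1.2 + y.1.2)) := by

  classical
  refine ⟨{
    r := fun x => Γ.r x.1.1
    s := fun x => Γ.s x.1.1
    d := fun x => x.1.2
    vert := fun v => ⟨(Γ.vert v, 0), by rw [Γ.d_vert, map_zero]⟩
    comp := fun x y => if h : Γ.s x.1.1 = Γ.r y.1.1 then
        ⟨(Γ.comp x.1.1 y.1.1, x.1.2 + y.1.2), by rw [Γ.d_comp _ _ h, x.2, y.2, map_add]⟩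
      else x
    r_vert := fun v => Γ.r_vert v
    s_vert := fun v => Γ.s_vert v
    d_vert := fun v => rfl
    r_comp := fun μ ν h => by rw [dif_pos h]; exact Γ.r_comp _ _ h
    s_comp := fun μ ν h => by rw [dif_pos h]; exact Γ.s_comp _ _ h
    d_comp := fun μ ν h => by rw [dif_pos h]
    comp_assoc := fun μ ν ξ h₁ h₂ => by
      rw [dif_pos h₁, dif_pos h₂, dif_pos, dif_pos]
      · exact Subtype.ext (Prod.ext (Γ.comp_assoc _ _ _ h₁ h₂) (add_assoc _ _ _))
      · dsimp only; rw [Γ.r_comp _ _ h₂]; exact h₁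
      · dsimp only; rw [Γ.s_comp _ _ h₁]; exact h₂
    vert_comp := fun μ => by
      dsimp only
      rw [dif_pos (by rw [Γ.s_vert])]
      exact Subtype.ext (Prod.ext (Γ.vert_comp _) (zero_add _))
    comp_vert := fun μ => by
      dsimp only
      rw [dif_pos (by rw [Γ.r_vert])]
      exact Subtype.ext (Prod.ext (Γ.comp_vert _) (add_zero _))
    factor := fun ξ p q h => by
      obtain ⟨⟨η, ζ⟩, ⟨hs, hdη, hdζ, hc⟩, huniq⟩ :=
        Γ.factor ξ.1.1 (f p) (f q) (by rw [ξ.2, h, map_add])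
      refine ⟨(⟨(η, p), hdη⟩, ⟨(ζ, q), hdζ⟩), ⟨hs, rfl, rfl, ?_⟩, ?_⟩
      · dsimp only; rw [dif_pos hs]
        exact Subtype.ext (Prod.ext hc h.symm)
      · rintro ⟨a, b⟩ ⟨hab, hda, hdb, habc⟩
        dsimp only at hab hda hdb habc
        rw [dif_pos hab] at habc
        have hval := congrArg Subtype.val habc
        have h1 : Γ.comp a.1.1 b.1.1 = ξ.1.1 := congrArg Prod.fst hval
        have h2 := huniq (a.1.1, b.1.1) ⟨hab, by rw [a.2, hda], by rw [b.2, hdb], h1⟩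
        have h2a : a.1.1 = η := congrArg Prod.fst h2
        have h2b : b.1.1 = ζ := congrArg Prod.snd h2
        exact Prod.ext (Subtype.ext (Prod.ext h2a hda)) (Subtype.ext (Prod.ext h2b hdb)) }, fun x => rfl, fun x => rfl, fun x => rfl,
    fun v => rfl, fun x y h => by dsimp only; rw [dif_pos h]⟩
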